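/- arXiv:2303.02775 — 3 statements merged into one kernel-verified Lean document; each statement's English description precedes it below -/
import Mathlib

section
/- First-order Trotter error bound: for Hermitian matrices A and B and real t ≥ 0, the spectral-norm difference satisfies ‖exp(-it(A+B)) - exp(-itA)·exp(-itB)‖ ≤ (t²/2)·‖[A,B]‖, where [A,B] = AB - BA. -/
/-!
Interpolate between the two evolutions: `f s = exp((t - s)(C + D)) exp(sC) exp(sD)` runs from
`exp(t(C + D))` to `exp(tC) exp(tD)`, and `f' s = exp((t - s)(C + D)) [exp(sC), D] exp(sD)`.
Interpolating once more, `[exp(sC), D]` has norm at most `s ‖[C, D]‖`. When all three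
exponentials are contractions (here `C = -iA` and `D = -iB` are skew-adjoint, so their
exponentials are unitary), integrating `s ‖[C, D]‖` over `[0, t]` gives `t² / 2 · ‖[C, D]‖`.
-/

open Matrix Complex Set
open scoped Matrix.Norms.L2Operator

theorem norm_mul_mul_le_of_norm_le_one {R : Type*} [NonUnitalSeminormedRing R] {a c : R}
    (ha : ‖a‖ ≤ 1) (hc : ‖c‖ ≤ 1) (b : R) : ‖a * b * c‖ ≤ ‖b‖ :=
  calc ‖a * b * c‖ ≤ ‖a‖ * ‖b‖ * ‖c‖ := norm_mul₃_le
    _ ≤ 1 * ‖b‖ * 1 := by gcongr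
    _ = ‖b‖ := by ring

theorem norm_image_sub_le_of_norm_deriv_le_deriv {E : Type*} [NormedAddCommGroup E]
    [NormedSpace ℝ E] {f f' : ℝ → E} {B B' : ℝ → ℝ} {a b : ℝ} (hab : a ≤ b)
    (hf : ∀ x, HasDerivAt f (f' x) x) (hB : ∀ x, HasDerivAt B (B' x) x)
    (bound : ∀ x ∈ Ico a b, ‖f' x‖ ≤ B' x) :
    ‖f b - f a‖ ≤ B b - B a :=
  image_norm_le_of_norm_deriv_right_le_deriv_boundary (f := fun x => f x - f a)
    (B := fun x => B x - B a)
    (fun x _ => ((hf x).sub_const (f a)).continuousAt.continuousWithinAt)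
    (fun x _ => ((hf x).sub_const (f a)).hasDerivWithinAt) (by simp)
    (fun x => (hB x).sub_const (B a)) bound ⟨hab, le_rfl⟩

section BanachAlgebra

variable {𝔸 : Type*} [NormedRing 𝔸] [NormedAlgebra ℂ 𝔸]

theorem commute_exp_smul_self (C : 𝔸) (z : ℂ) : Commute (NormedSpace.exp (z • C)) C :=
  (((Commute.refl C).smul_right z).exp_right).symm

variable [CompleteSpace 𝔸]

theorem hasDerivAt_exp_ofReal_smul (C : 𝔸) (s : ℝ) :
    HasDerivAt (fun s : ℝ => NormedSpace.exp ((s : ℂ) • C))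
      (NormedSpace.exp ((s : ℂ) • C) * C) s :=
  (hasDerivAt_exp_smul_const C (s : ℂ)).scomp s ofRealCLM.hasDerivAt |>.congr_deriv (one_smul _ _)

theorem hasDerivAt_exp_ofReal_sub_smul (C : 𝔸) (t s : ℝ) :
    HasDerivAt (fun s : ℝ => NormedSpace.exp (((t - s : ℝ) : ℂ) • C))
      (-(C * NormedSpace.exp (((t - s : ℝ) : ℂ) • C))) s :=
  ((hasDerivAt_exp_smul_const' C ((t - s : ℝ) : ℂ)).scomp (t - s) ofRealCLM.hasDerivAt).scomp s
    ((hasDerivAt_id s).const_sub t) |>.congr_deriv (by simp)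

variable {C D : 𝔸}

theorem norm_mul_exp_sub_exp_mul_le
    (hC : ∀ s : ℝ, 0 ≤ s → ‖NormedSpace.exp ((s : ℂ) • C)‖ ≤ 1) (Y : 𝔸) {t : ℝ} (ht : 0 ≤ t) :
    ‖Y * NormedSpace.exp ((t : ℂ) • C) - NormedSpace.exp ((t : ℂ) • C) * Y‖
      ≤ t * ‖Y * C - C * Y‖ := by
  set e : ℝ → 𝔸 := fun s => NormedSpace.exp ((s : ℂ) • C)
  have hderiv : ∀ s : ℝ, HasDerivAt (fun s => e (t - s) * Y * e s)
      (e (t - s) * (Y * C - C * Y) * e s) s := by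
    intro s
    refine (((hasDerivAt_exp_ofReal_sub_smul C t s).mul_const Y).mul
      (hasDerivAt_exp_ofReal_smul C s)).congr_deriv ?_
    rw [← (commute_exp_smul_self C _).eq, (commute_exp_smul_self C s).eq]
    noncomm_ring
  have hbound : ∀ s ∈ Ico 0 t, ‖e (t - s) * (Y * C - C * Y) * e s‖ ≤ ‖Y * C - C * Y‖ :=
    fun s hs => norm_mul_mul_le_of_norm_le_one (hC _ (by linarith [hs.2])) (hC s hs.1) _
  have := norm_image_sub_le_of_norm_deriv_right_le_segment
    (fun s _ => (hderiv s).continuousAt.continuousWithinAt)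
    (fun s _ => (hderiv s).hasDerivWithinAt) hbound t ⟨ht, le_rfl⟩
  simpa [e, mul_comm t] using this

theorem norm_exp_add_sub_exp_mul_exp_le
    (hC : ∀ s : ℝ, 0 ≤ s → ‖NormedSpace.exp ((s : ℂ) • C)‖ ≤ 1)
    (hD : ∀ s : ℝ, 0 ≤ s → ‖NormedSpace.exp ((s : ℂ) • D)‖ ≤ 1)
    (hCD : ∀ s : ℝ, 0 ≤ s → ‖NormedSpace.exp ((s : ℂ) • (C + D))‖ ≤ 1) {t : ℝ} (ht : 0 ≤ t) :
    ‖NormedSpace.exp ((t : ℂ) • (C + D))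
        - NormedSpace.exp ((t : ℂ) • C) * NormedSpace.exp ((t : ℂ) • D)‖
      ≤ t ^ 2 / 2 * ‖C * D - D * C‖ := by
  set eC : ℝ → 𝔸 := fun s => NormedSpace.exp ((s : ℂ) • C)
  set eD : ℝ → 𝔸 := fun s => NormedSpace.exp ((s : ℂ) • D)
  set eCD : ℝ → 𝔸 := fun s => NormedSpace.exp ((s : ℂ) • (C + D))
  have hderiv : ∀ s : ℝ, HasDerivAt (fun s => eCD (t - s) * (eC s * eD s))
      (eCD (t - s) * (eC s * D - D * eC s) * eD s) s := by
    intro s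
    refine ((hasDerivAt_exp_ofReal_sub_smul (C + D) t s).mul
      ((hasDerivAt_exp_ofReal_smul C s).mul (hasDerivAt_exp_ofReal_smul D s))).congr_deriv ?_
    simp only [eC, eD, eCD, Pi.mul_apply]
    rw [← (commute_exp_smul_self (C + D) _).eq, (commute_exp_smul_self C s).eq,
      (commute_exp_smul_self D s).eq]
    noncomm_ring
  have hbound : ∀ s ∈ Ico 0 t,
      ‖eCD (t - s) * (eC s * D - D * eC s) * eD s‖ ≤ s * ‖C * D - D * C‖ := by
    intro s hs
    calc ‖eCD (t - s) * (eC s * D - D * eC s) * eD s‖ ≤ ‖eC s * D - D * eC s‖ :=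
          norm_mul_mul_le_of_norm_le_one (hCD _ (by linarith [hs.2])) (hD s hs.1) _
      _ = ‖D * eC s - eC s * D‖ := norm_sub_rev _ _
      _ ≤ s * ‖D * C - C * D‖ := norm_mul_exp_sub_exp_mul_le hC D hs.1
      _ = s * ‖C * D - D * C‖ := by rw [norm_sub_rev]
  have hB : ∀ s : ℝ, HasDerivAt (fun s => s ^ 2 / 2 * ‖C * D - D * C‖) (s * ‖C * D - D * C‖) s :=
    fun s => by simpa using ((hasDerivAt_pow 2 s).div_const 2).mul_const ‖C * D - D * C‖
  have := norm_image_sub_le_of_norm_deriv_le_deriv ht hderiv hB hbound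
  rw [norm_sub_rev]
  simpa [eC, eD, eCD] using this

end BanachAlgebra

theorem norm_exp_ofReal_smul_le_one_of_mem_skewAdjoint {E : Type*} [NormedRing E] [StarRing E]
    [CStarRing E] [NormedAlgebra ℂ E] [StarModule ℂ E] [CompleteSpace E] {C : E}
    (hC : C ∈ skewAdjoint E) (s : ℝ) : ‖NormedSpace.exp ((s : ℂ) • C)‖ ≤ 1 := by
  -- `exp_mem_unitary_of_mem_skewAdjoint` is stated for `ℚ`-algebras.
  let _ : NormedAlgebra ℚ E := .restrictScalars ℚ ℂ E
  have hsC : (s : ℂ) • C ∈ skewAdjoint E := by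
    rw [skewAdjoint.mem_iff, star_smul, Complex.star_def, conj_ofReal, skewAdjoint.mem_iff.1 hC,
      smul_neg]
  have hU := NormedSpace.exp_mem_unitary_of_mem_skewAdjoint hsC
  rcases subsingleton_or_nontrivial E with _ | _
  · rw [Subsingleton.elim (NormedSpace.exp _) 0, norm_zero]
    exact zero_le_one
  · exact (CStarRing.norm_of_mem_unitary hU).le

/-- First-order Trotter error bound:
`‖exp(-it(A+B)) - exp(-itA)·exp(-itB)‖ ≤ (t²/2)·‖AB - BA‖`. -/
theorem trotter_first_order_bound {N : ℕ} (A B : Matrix (Fin N) (Fin N) ℂ)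
    (hA : A.IsHermitian) (hB : B.IsHermitian) (t : ℝ) (ht : 0 ≤ t) :
    ‖NormedSpace.exp ((-(Complex.I * t)) • (A + B))
        - NormedSpace.exp ((-(Complex.I * t)) • A)
          * NormedSpace.exp ((-(Complex.I * t)) • B)‖
      ≤ t ^ 2 / 2 * ‖A * B - B * A‖ := by
  have hcontr : ∀ {X : Matrix (Fin N) (Fin N) ℂ}, X.IsHermitian →
      ∀ s : ℝ, 0 ≤ s → ‖NormedSpace.exp ((s : ℂ) • (-I • X))‖ ≤ 1 :=
    fun hX s _ => norm_exp_ofReal_smul_le_one_of_mem_skewAdjoint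
      (hX.isSelfAdjoint.smul_mem_skewAdjoint (skewAdjoint.mem_iff.2 (by simp))) s
  have hexp : ∀ X : Matrix (Fin N) (Fin N) ℂ,
      (-(I * t)) • X = (t : ℂ) • (-I • X) := fun X => by rw [smul_smul]; ring_nf
  have hcomm : (-I • A) * (-I • B) - (-I • B) * (-I • A) = -(A * B - B * A) := by
    simp only [smul_mul_smul, neg_mul_neg, I_mul_I, neg_one_smul]; abel
  have key := norm_exp_add_sub_exp_mul_exp_le (hcontr hA) (hcontr hB)
    (by simpa only [smul_add] using hcontr (hA.add hB)) ht
  rwa [hcomm, norm_neg, ← smul_add, ← hexp, ← hexp, ← hexp] at key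
end

section
/- Repeated Trotter error bound: for Hermitian matrices H_1,...,H_L with Λ = Σ_j ‖H_j‖, time T ≥ 0, and positive integer R, ‖exp(-iT Σ_j H_j) - (Π_j exp(-i(T/R)H_j))^R‖ ≤ ((ΛT)²/R)·e^{ΛT/R}. -/
/-!
With `c = -i T / R`, put `A = exp (c ∑ H_j)` and `B = ∏ exp (c H_j)`. Both are unitary, so the
telescoping identity `A^(n+1) - B^(n+1) = A (A^n - B^n) + (A - B) B^n` gives
`‖A^R - B^R‖ ≤ R ‖A - B‖`. Both `A` and `B` agree with `1 + c ∑ H_j` up to second order, and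
majorising their series termwise by the exponential series of `s = ∑ ‖c H_j‖ = Λ T / R` gives
`‖A - B‖ ≤ 2 (e^s - 1 - s) ≤ s² e^s`.
-/

open Finset
open scoped Nat

theorem Real.hasSum_exp_sub_sum_range (s : ℝ) (n : ℕ) :
    HasSum (fun k => s ^ (k + n) / (k + n)!) (Real.exp s - ∑ m ∈ range n, s ^ m / m !) :=
  (hasSum_nat_add_iff' n).mpr (Real.exp_eq_exp_ℝ ▸ NormedSpace.expSeries_div_hasSum_exp s)

theorem Real.two_mul_exp_sub_one_sub_le {s : ℝ} (hs : 0 ≤ s) :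
    2 * (Real.exp s - 1 - s) ≤ s ^ 2 * Real.exp s := by
  have htail : HasSum (fun k => 2 * (s ^ (k + 2) / (k + 2)!)) (2 * (Real.exp s - 1 - s)) := by
    simpa [sum_range_succ, sub_sub] using (Real.hasSum_exp_sub_sum_range s 2).mul_left 2
  have hexp : HasSum (fun k => s ^ 2 * (s ^ k / k !)) (s ^ 2 * Real.exp s) := by
    simpa using (Real.hasSum_exp_sub_sum_range s 0).mul_left (s ^ 2)
  refine hasSum_le (fun k => ?_) htail hexp
  have hfac : (2 * k ! : ℝ) ≤ (k + 2)! := by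
    have : 2 * k ! ≤ (k + 2)! := by
      rw [Nat.factorial_succ, Nat.factorial_succ, ← mul_assoc]
      exact Nat.mul_le_mul_right _ (by nlinarith)
    exact_mod_cast this
  calc 2 * (s ^ (k + 2) / (k + 2)!) ≤ 2 * (s ^ (k + 2) / (2 * k !)) := by gcongr
    _ = s ^ 2 * (s ^ k / k !) := by field_simp; ring

theorem norm_pow_sub_pow_le_of_norm_le_one {R : Type*} [NormedRing R] [NormOneClass R] {a b : R}
    (ha : ‖a‖ ≤ 1) (hb : ‖b‖ ≤ 1) (n : ℕ) : ‖a ^ n - b ^ n‖ ≤ n * ‖a - b‖ := by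
  induction n with
  | zero => simp
  | succ n ih =>
    have hsplit : a ^ (n + 1) - b ^ (n + 1) = a * (a ^ n - b ^ n) + (a - b) * b ^ n := by
      rw [pow_succ', pow_succ']; noncomm_ring
    calc ‖a ^ (n + 1) - b ^ (n + 1)‖ ≤ ‖a‖ * ‖a ^ n - b ^ n‖ + ‖a - b‖ * ‖b‖ ^ n := by
          grw [hsplit, norm_add_le, norm_mul_le, norm_mul_le, norm_pow_le]
      _ ≤ 1 * (n * ‖a - b‖) + ‖a - b‖ * 1 := by gcongr; exact pow_le_one₀ (norm_nonneg b) hb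
      _ = (n + 1 : ℕ) * ‖a - b‖ := by push_cast; ring

namespace NormedSpace

variable {𝔸 : Type*} [NormedRing 𝔸] [NormOneClass 𝔸] [NormedAlgebra ℚ 𝔸] [CompleteSpace 𝔸]

theorem norm_exp_sub_sum_range_le_of_norm_le {x : 𝔸} {r : ℝ} (hx : ‖x‖ ≤ r) (n : ℕ) :
    ‖exp x - ∑ m ∈ range n, (m !⁻¹ : ℚ) • x ^ m‖ ≤ Real.exp r - ∑ m ∈ range n, r ^ m / m ! := by
  refine ((hasSum_nat_add_iff' n).mpr (exp_series_hasSum_exp' (𝕂 := ℚ) x)).norm_le_of_bounded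
    (Real.hasSum_exp_sub_sum_range r n) fun k => ?_
  rw [norm_smul, div_eq_inv_mul]
  gcongr
  · rw [← Rat.norm_cast_real]; simp
  · exact (norm_pow_le _ _).trans (pow_le_pow_left₀ (norm_nonneg x) hx _)

theorem norm_exp_le_of_norm_le {x : 𝔸} {r : ℝ} (hx : ‖x‖ ≤ r) : ‖exp x‖ ≤ Real.exp r := by
  simpa using norm_exp_sub_sum_range_le_of_norm_le hx 0

theorem norm_exp_sub_one_le_of_norm_le {x : 𝔸} {r : ℝ} (hx : ‖x‖ ≤ r) :
    ‖exp x - 1‖ ≤ Real.exp r - 1 := by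
  simpa using norm_exp_sub_sum_range_le_of_norm_le hx 1

theorem norm_exp_sub_one_sub_le_of_norm_le {x : 𝔸} {r : ℝ} (hx : ‖x‖ ≤ r) :
    ‖exp x - 1 - x‖ ≤ Real.exp r - 1 - r := by
  simpa [sum_range_succ, sub_sub] using norm_exp_sub_sum_range_le_of_norm_le hx 2

theorem norm_prod_exp_sub_one_sub_sum_le {L : ℕ} (x : Fin L → 𝔸) :
    ‖(List.ofFn fun j => exp (x j)).prod - 1 - ∑ j, x j‖
      ≤ Real.exp (∑ j, ‖x j‖) - 1 - ∑ j, ‖x j‖ := by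
  induction L with
  | zero => simp
  | succ L ih =>
    set y := x 0
    set P := (List.ofFn fun j : Fin L => exp (x j.succ)).prod
    set S := ∑ j : Fin L, x j.succ
    set s := ∑ j : Fin L, ‖x j.succ‖
    have hS : ‖S‖ ≤ s := norm_sum_le _ _
    have hP : ‖P - 1 - S‖ ≤ Real.exp s - 1 - s := ih fun j => x j.succ
    have hy := norm_exp_le_of_norm_le (le_refl ‖y‖)
    have hy₁ := norm_exp_sub_one_le_of_norm_le (le_refl ‖y‖)
    have hy₂ := norm_exp_sub_one_sub_le_of_norm_le (le_refl ‖y‖)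
    have hsplit : exp y * P - 1 - (y + S)
        = exp y * (P - 1 - S) + (exp y - 1 - y) + (exp y - 1) * S := by
      noncomm_ring
    rw [List.ofFn_succ, List.prod_cons, Fin.sum_univ_succ, Fin.sum_univ_succ, hsplit]
    calc _ ≤ ‖exp y‖ * ‖P - 1 - S‖ + ‖exp y - 1 - y‖ + ‖exp y - 1‖ * ‖S‖ := by
          grw [norm_add₃_le, norm_mul_le, norm_mul_le]
      _ ≤ Real.exp ‖y‖ * (Real.exp s - 1 - s) + (Real.exp ‖y‖ - 1 - ‖y‖)
            + (Real.exp ‖y‖ - 1) * s := by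
          gcongr
          exact sub_nonneg.2 (Real.one_le_exp (norm_nonneg y))
      _ = Real.exp (‖y‖ + s) - 1 - (‖y‖ + s) := by rw [Real.exp_add]; ring

theorem norm_exp_sum_sub_prod_exp_le {L : ℕ} (x : Fin L → 𝔸) :
    ‖exp (∑ j, x j) - (List.ofFn fun j => exp (x j)).prod‖
      ≤ (∑ j, ‖x j‖) ^ 2 * Real.exp (∑ j, ‖x j‖) := by
  set P := (List.ofFn fun j => exp (x j)).prod
  set S := ∑ j, x j
  set s := ∑ j, ‖x j‖
  have hS : ‖exp S - 1 - S‖ ≤ Real.exp s - 1 - s :=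
    norm_exp_sub_one_sub_le_of_norm_le (norm_sum_le _ _)
  calc ‖exp S - P‖ = ‖(exp S - 1 - S) - (P - 1 - S)‖ := by congr 1; abel
    _ ≤ (Real.exp s - 1 - s) + (Real.exp s - 1 - s) :=
      (norm_sub_le _ _).trans (add_le_add hS (norm_prod_exp_sub_one_sub_sum_le x))
    _ = 2 * (Real.exp s - 1 - s) := by ring
    _ ≤ s ^ 2 * Real.exp s := Real.two_mul_exp_sub_one_sub_le (by positivity)

end NormedSpace

section CStarAlgebra

open NormedSpace

variable {𝔸 : Type*} [CStarAlgebra 𝔸]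

theorem norm_exp_sub_trotter_pow_le {L : ℕ} (a : Fin L → 𝔸) (ha : ∀ j, IsSelfAdjoint (a j))
    {t : ℝ} (ht : 0 ≤ t) {R : ℕ} (hR : R ≠ 0) :
    ‖exp ((-(Complex.I * t)) • ∑ j, a j)
        - (List.ofFn fun j => exp ((-(Complex.I * (t / R))) • a j)).prod ^ R‖
      ≤ ((∑ j, ‖a j‖) * t) ^ 2 / R * Real.exp ((∑ j, ‖a j‖) * t / R) := by
  rcases subsingleton_or_nontrivial 𝔸 with h | h
  · rw [Subsingleton.elim (_ - _) (0 : 𝔸), norm_zero]; positivity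
  let : NormedAlgebra ℚ 𝔸 := .restrictScalars ℚ ℂ 𝔸
  set c : ℂ := -(Complex.I * (t / R))
  have hc : c ∈ skewAdjoint ℂ := by
    rw [skewAdjoint.mem_iff]; simp [c]
  have hmem : ∀ {b : 𝔸}, IsSelfAdjoint b → exp (c • b) ∈ unitary 𝔸 := fun hb =>
    exp_mem_unitary_of_mem_skewAdjoint (hb.smul_mem_skewAdjoint hc)
  have hA : exp ((-(Complex.I * t)) • ∑ j, a j) = exp (c • ∑ j, a j) ^ R := by
    rw [← exp_nsmul, ← Nat.cast_smul_eq_nsmul ℂ, smul_smul]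
    congr 2
    simp only [c]
    field_simp
  have hB : (List.ofFn fun j => exp (c • a j)).prod ∈ unitary 𝔸 :=
    list_prod_mem (by simpa using fun j => hmem (ha j))
  have hnorm : ∑ j, ‖c • a j‖ = (∑ j, ‖a j‖) * t / R := by
    simp [c, norm_smul, abs_of_nonneg ht, ← Finset.mul_sum]
    ring
  rw [hA]
  calc _ ≤ R * ‖exp (c • ∑ j, a j) - (List.ofFn fun j => exp (c • a j)).prod‖ :=
        norm_pow_sub_pow_le_of_norm_le_one (CStarRing.norm_of_mem_unitary
          (hmem (isSelfAdjoint_sum _ fun j _ => ha j))).le (CStarRing.norm_of_mem_unitary hB).le R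
    _ ≤ R * ((∑ j, ‖c • a j‖) ^ 2 * Real.exp (∑ j, ‖c • a j‖)) := by
        gcongr
        simpa [Finset.smul_sum] using norm_exp_sum_sub_prod_exp_le fun j => c • a j
    _ = _ := by rw [hnorm]; field_simp

end CStarAlgebra

open Matrix Complex
open scoped Matrix.Norms.L2Operator

/-- Repeated Trotter error bound: for Hermitian `H 1, …, H L` with `Λ = Σ_j ‖H_j‖`,
time `T ≥ 0` and Trotterization number `R > 0`,
`‖exp(-iT Σ_j H_j) - (Π_j exp(-i(T/R)H_j))^R‖ ≤ ((ΛT)²/R)·e^{ΛT/R}`. -/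
theorem repeated_trotter_bound {N L : ℕ} (H : Fin L → Matrix (Fin N) (Fin N) ℂ)
    (hH : ∀ j, (H j).IsHermitian) (T : ℝ) (hT : 0 ≤ T) (R : ℕ) (hR : 0 < R)
    (Λ : ℝ) (hΛ : Λ = ∑ j : Fin L, ‖H j‖) :
    ‖NormedSpace.exp ((-(Complex.I * T)) • ∑ j : Fin L, H j)
        - ((List.ofFn fun j : Fin L =>
            NormedSpace.exp ((-(Complex.I * (T / R))) • H j)).prod) ^ R‖
      ≤ (Λ * T) ^ 2 / R * Real.exp (Λ * T / R) :=
  hΛ ▸ norm_exp_sub_trotter_pow_le H (fun j => (hH j).isSelfAdjoint) hT hR.ne'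
end

section
/- Discretization error bound for a time-dependent Hamiltonian: let H(t) = Σ_{k=1}^K α_k(t) H_k with ‖H_k‖ = 1 and each α_k an M-Lipschitz function on [0,T]. Let 0 = t_1 < t_2 < ... < t_{D+1} = T be a uniform partition with step T/D, and let H̃(t) be the piecewise-constant Hamiltonian equal to H(t_d) on [t_d, t_{d+1}). Then the unitaries U(T) and Ũ(T) generated by evolving under H(t) and H̃(t) respectively over [0,T] satisfy ‖U(T) - Ũ(T)‖ ≤ C·MKT²/D for an absolute constant C > 0 (one may take C = 1). -/
/-!
The exact and the discretized evolutions are generated by skew-adjoint elements, so both are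
contractions and the global error telescopes into the sum of the `D` one-step errors. On a step
`[t, t + δ]` the frozen generator `X = G t` is removed in the interaction picture
`E s = exp ((t - s) • X) * U s`, whose derivative `exp ((t - s) • X) * (G s - X) * U s` has
norm at most `M K δ` by the Lipschitz bound; hence each step errs by at most `M K δ²`, and `D`
steps by `M K T² / D`.
-/

open NormedSpace Set

theorem norm_sub_list_prod_mul_le {R : Type*} [NormedRing R] (u w : ℕ → R) {e : ℝ} {n : ℕ}
    (hw : ∀ d < n, ‖w d‖ ≤ 1) (hstep : ∀ d < n, ‖u (d + 1) - w d * u d‖ ≤ e) :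
    ‖u n - (List.ofFn fun d : Fin n => w d).reverse.prod * u 0‖ ≤ n * e := by
  induction n with
  | zero => simp
  | succ n ih =>
    set P := (List.ofFn fun d : Fin n => w d).reverse.prod
    have hP : (List.ofFn fun d : Fin (n + 1) => w d).reverse.prod = w n * P := by
      rw [List.ofFn_succ', List.concat_eq_append, List.reverse_append, List.prod_append]
      simp [P]
    have hsplit : u (n + 1) - w n * P * u 0 = (u (n + 1) - w n * u n) + w n * (u n - P * u 0) := by
      noncomm_ring
    calc ‖u (n + 1) - (List.ofFn fun d : Fin (n + 1) => w d).reverse.prod * u 0‖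
        ≤ e + 1 * (n * e) := by
          rw [hP, hsplit]
          refine norm_add_le_of_le (hstep n n.lt_succ_self) ((norm_mul_le _ _).trans ?_)
          exact mul_le_mul (hw n n.lt_succ_self)
            (ih (fun d hd => hw d (hd.trans n.lt_succ_self))
              (fun d hd => hstep d (hd.trans n.lt_succ_self))) (norm_nonneg _) zero_le_one
      _ = (n + 1 : ℕ) * e := by push_cast; ring

section BanachAlgebra

variable {𝔸 : Type*} [NormedRing 𝔸] [NormedAlgebra ℝ 𝔸] [CompleteSpace 𝔸]

theorem norm_sub_exp_smul_mul_le {U G : ℝ → 𝔸} {X : 𝔸} {a b ε : ℝ} (hab : a ≤ b)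
    (hU : ∀ s ∈ Icc a b, HasDerivAt U (G s * U s) s)
    (hU_norm : ∀ s ∈ Ico a b, ‖U s‖ ≤ 1) (hX : ∀ r : ℝ, ‖exp (r • X)‖ ≤ 1)
    (hG : ∀ s ∈ Ico a b, ‖G s - X‖ ≤ ε) :
    ‖U b - exp ((b - a) • X) * U a‖ ≤ ε * (b - a) := by
  set E : ℝ → 𝔸 := fun s => exp ((a - s) • X) * U s
  have hE : ∀ s ∈ Icc a b, HasDerivAt E (exp ((a - s) • X) * ((G s - X) * U s)) s := by
    intro s hs
    have hexp := (hasDerivAt_exp_smul_const X (a - s)).scomp s ((hasDerivAt_id s).const_sub a)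
    refine (hexp.mul (hU s hs)).congr_deriv ?_
    simp only [Function.comp_apply, neg_smul, one_smul]
    noncomm_ring
  have hE_norm : ∀ s ∈ Ico a b, ‖exp ((a - s) • X) * ((G s - X) * U s)‖ ≤ ε := fun s hs => by
    simpa using norm_mul_le_of_le (hX _) (norm_mul_le_of_le (hG s hs) (hU_norm s hs))
  have hEab := norm_image_sub_le_of_norm_deriv_le_segment'
    (fun s hs => (hE s hs).hasDerivWithinAt) hE_norm b (right_mem_Icc.2 hab)
  have hUb : U b = exp ((b - a) • X) * E b := by
    let : NormedAlgebra ℚ 𝔸 := .restrictScalars ℚ ℝ 𝔸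
    rw [← mul_assoc, ← exp_add_of_commute (((Commute.refl X).smul_left _).smul_right _),
      ← add_smul]
    simp
  calc ‖U b - exp ((b - a) • X) * U a‖ = ‖exp ((b - a) • X) * (E b - E a)‖ := by
        rw [mul_sub, ← hUb]
        simp [E]
    _ ≤ 1 * (ε * (b - a)) := norm_mul_le_of_le (hX _) hEab
    _ = ε * (b - a) := one_mul _

theorem norm_sub_list_prod_exp_smul_mul_le {U G : ℝ → 𝔸} {L δ : ℝ} {D : ℕ}
    (hL : 0 ≤ L) (hδ : 0 ≤ δ)
    (hU : ∀ t ∈ Icc 0 (D * δ), HasDerivAt U (G t * U t) t)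
    (hU_norm : ∀ t ∈ Icc 0 (D * δ), ‖U t‖ ≤ 1)
    (hG_exp : ∀ (r : ℝ), ∀ t ∈ Icc 0 (D * δ), ‖exp (r • G t)‖ ≤ 1)
    (hG : ∀ s ∈ Icc 0 (D * δ), ∀ t ∈ Icc 0 (D * δ), ‖G s - G t‖ ≤ L * |s - t|) :
    ‖U (D * δ) - (List.ofFn fun d : Fin D => exp (δ • G (d * δ))).reverse.prod * U 0‖ ≤
      D * (L * δ ^ 2) := by
  have hgrid : ∀ d < D, Icc (d * δ) ((d + 1 : ℕ) * δ) ⊆ Icc 0 (D * δ) := fun d hd =>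
    Icc_subset_Icc (by positivity)
      (mul_le_mul_of_nonneg_right (Nat.cast_le.2 (Nat.succ_le_of_lt hd)) hδ)
  have hleft : ∀ d : ℕ, (d : ℝ) * δ ∈ Icc (d * δ) ((d + 1 : ℕ) * δ) := fun d =>
    left_mem_Icc.2 (by gcongr; simp)
  have hstep : ∀ d < D,
      ‖U ((d + 1 : ℕ) * δ) - exp (δ • G (d * δ)) * U (d * δ)‖ ≤ L * δ ^ 2 := by
    intro d hd
    have hδ_eq : ((d + 1 : ℕ) : ℝ) * δ - d * δ = δ := by push_cast; ring
    have hfrozen : ∀ s ∈ Ico (d * δ) ((d + 1 : ℕ) * δ),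
        ‖G s - G (d * δ)‖ ≤ L * δ := by
      intro s hs
      refine (hG s (hgrid d hd (Ico_subset_Icc_self hs)) _ (hgrid d hd (hleft d))).trans ?_
      rw [abs_of_nonneg (sub_nonneg.2 hs.1)]
      gcongr
      linarith [hs.2]
    simpa only [hδ_eq, sq, mul_assoc] using norm_sub_exp_smul_mul_le (hleft d).2
      (fun s hs => hU s (hgrid d hd hs))
      (fun s hs => hU_norm s (hgrid d hd (Ico_subset_Icc_self hs)))
      (fun r => hG_exp r _ (hgrid d hd (hleft d))) hfrozen
  simpa using norm_sub_list_prod_mul_le (fun d => U (d * δ)) (fun d => exp (δ • G (d * δ)))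
    (fun d hd => hG_exp δ _ (hgrid d hd (hleft d))) hstep

end BanachAlgebra

section StarAlgebra

variable {A : Type*} [NormedRing A] [NormedAlgebra ℝ A] [StarRing A] [ContinuousStar A]
  [StarModule ℝ A]

theorem star_mul_self_eq_one_of_hasDerivAt {U G : ℝ → A} {a b : ℝ} (ha : star (U a) * U a = 1)
    (hU : ∀ t ∈ Icc a b, HasDerivAt U (G t * U t) t)
    (hG : ∀ t ∈ Icc a b, G t ∈ skewAdjoint A) :
    ∀ t ∈ Icc a b, star (U t) * U t = 1 := by
  have hderiv : ∀ t ∈ Icc a b, HasDerivAt (fun t => star (U t) * U t) 0 t := by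
    intro t ht
    refine ((hU t ht).star.mul (hU t ht)).congr_deriv ?_
    rw [star_mul, skewAdjoint.mem_iff.1 (hG t ht)]
    noncomm_ring
  have hconst := constant_of_has_deriv_right_zero
    (fun t ht => (hderiv t ht).continuousAt.continuousWithinAt)
    (fun t ht => (hderiv t (Ico_subset_Icc_self ht)).hasDerivWithinAt)
  intro t ht
  rw [hconst t ht, ha]

end StarAlgebra

theorem norm_le_one_of_star_mul_self_eq_one {E : Type*} [NormedRing E] [StarRing E] [CStarRing E]
    {u : E} (hu : star u * u = 1) : ‖u‖ ≤ 1 := by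
  have h1 : ‖(1 : E)‖ = ‖(1 : E)‖ * ‖(1 : E)‖ := by
    simpa using CStarRing.norm_star_mul_self (x := (1 : E))
  have hu' : ‖u‖ * ‖u‖ = ‖(1 : E)‖ := by rw [← CStarRing.norm_star_mul_self, hu]
  have h1_le : ‖(1 : E)‖ ≤ 1 := by nlinarith [norm_nonneg (1 : E)]
  nlinarith [norm_nonneg u]

theorem norm_exp_le_one_of_mem_skewAdjoint {A : Type*} [CStarAlgebra A] {x : A}
    (hx : x ∈ skewAdjoint A) : ‖exp x‖ ≤ 1 :=
  let : NormedAlgebra ℚ A := .restrictScalars ℚ ℂ A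
  norm_le_one_of_star_mul_self_eq_one (Unitary.star_mul_self_of_mem
    (exp_mem_unitary_of_mem_skewAdjoint hx))

theorem norm_sum_smul_sub_sum_smul_le {ι E : Type*} [Fintype ι] [SeminormedAddCommGroup E]
    [NormedSpace ℝ E] {α : ι → ℝ → ℝ} {H : ι → E} {L : NNReal} {S : Set ℝ}
    (hα : ∀ k, LipschitzOnWith L (α k) S) (hH : ∀ k, ‖H k‖ ≤ 1) {s t : ℝ}
    (hs : s ∈ S) (ht : t ∈ S) :
    ‖∑ k, α k s • H k - ∑ k, α k t • H k‖ ≤ L * Fintype.card ι * |s - t| := by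
  rw [← Finset.sum_sub_distrib]
  calc ‖∑ k, (α k s • H k - α k t • H k)‖ ≤ ∑ _k : ι, L * |s - t| := by
        refine norm_sum_le_of_le _ fun k _ => ?_
        rw [← sub_smul, norm_smul]
        simpa [Real.dist_eq] using mul_le_mul ((hα k).dist_le_mul s hs t ht) (hH k)
          (norm_nonneg _) (by positivity)
    _ = L * Fintype.card ι * |s - t| := by simp; ring

open Matrix Complex
open scoped Matrix.Norms.L2Operator

/-- Discretization error bound for a time-dependent Hamiltonian
`H(t) = Σ_k α_k(t) H_k` with `‖H_k‖ = 1` and `α_k` `M`-Lipschitz on `[0, T]`.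
The unitary `U` solves `U'(t) = -i H(t) U(t)`, `U(0) = 1`, and `Ũ(T)` is the ordered
product (from `d = D-1` down to `d = 0`) of `exp(-i(T/D) H(d·T/D))`, i.e. the evolution
under the piecewise-constant Hamiltonian using the left endpoints of a uniform partition
with step `T/D`. Then `‖U(T) - Ũ(T)‖ ≤ M K T² / D` (absolute constant `C = 1`). -/
theorem discretization_error_bound {N K : ℕ}
    (Hk : Fin K → Matrix (Fin N) (Fin N) ℂ) (hHerm : ∀ k, (Hk k).IsHermitian)
    (hNorm : ∀ k, ‖Hk k‖ = 1)
    (T M : ℝ) (hT : 0 < T) (hM : 0 ≤ M)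
    (α : Fin K → ℝ → ℝ)
    (hα : ∀ k, LipschitzOnWith (Real.toNNReal M) (α k) (Set.Icc 0 T))
    (D : ℕ) (hD : 0 < D)
    (U : ℝ → Matrix (Fin N) (Fin N) ℂ)
    (hU0 : U 0 = 1)
    (hU : ∀ t ∈ Set.Icc (0 : ℝ) T,
      HasDerivAt U ((-Complex.I) • ((∑ k : Fin K, (α k t : ℂ) • Hk k) * U t)) t) :
    ‖U T - ((List.ofFn fun d : Fin D =>
        NormedSpace.exp ((-(Complex.I * (T / D))) •
          ∑ k : Fin K, (α k (d * (T / D)) : ℂ) • Hk k)).reverse).prod‖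
      ≤ M * K * T ^ 2 / D := by
  have hD' : (D : ℝ) ≠ 0 := by positivity
  have hT_eq : D * (T / D) = T := by field_simp
  rw [← hT_eq] at hU hα
  set G : ℝ → Matrix (Fin N) (Fin N) ℂ := fun t => ∑ k, α k t • (-I • Hk k)
  have hG_skew : ∀ t, G t ∈ skewAdjoint _ := fun t => sum_mem fun k _ =>
    skewAdjoint.smul_mem _ <|
      (hHerm k).isSelfAdjoint.smul_mem_skewAdjoint (by simp [skewAdjoint.mem_iff])
  have hU' : ∀ t ∈ Icc 0 (D * (T / D)), HasDerivAt U (G t * U t) t := by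
    simpa only [G, Finset.sum_mul, Finset.smul_sum, smul_mul_assoc, ← Complex.coe_smul, smul_smul,
      mul_comm] using hU
  have hU_norm : ∀ t ∈ Icc 0 (D * (T / D)), ‖U t‖ ≤ 1 := fun t ht =>
    norm_le_one_of_star_mul_self_eq_one
      (star_mul_self_eq_one_of_hasDerivAt (by simp [hU0]) hU' (fun t _ => hG_skew t) t ht)
  have key := norm_sub_list_prod_exp_smul_mul_le (by positivity) (by positivity) hU' hU_norm
    (fun r t _ => norm_exp_le_one_of_mem_skewAdjoint (skewAdjoint.smul_mem r (hG_skew t)))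
    (fun s hs t ht => norm_sum_smul_sub_sum_smul_le hα (fun k => by simp [norm_smul, hNorm]) hs ht)
  have hW :
      (fun d : Fin D => exp ((-(I * (T / D))) • ∑ k, (α k (d * (T / D)) : ℂ) • Hk k)) =
        fun d : Fin D => exp ((T / D) • G (d * (T / D))) := by
    funext d
    simp only [G, Finset.smul_sum, ← Complex.coe_smul, smul_smul]
    congr 2
    funext k
    congr 1
    push_cast
    ring
  rw [hT_eq, hU0, mul_one, ← hW, Real.coe_toNNReal _ hM, Fintype.card_fin] at key
  calc _ ≤ _ := key
    _ = M * K * T ^ 2 / D := by field_simp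
end
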